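/- arXiv:2111.06557 — 2 statements merged into one kernel-verified Lean document; each statement's English description precedes it below -/
import Mathlib

section
/- Let $(X,T)$ be a topological dynamical system with metric $\rho$ and let $x,y\in X$. Then $(x,y)$ is a mean Li–Yorke pair for $T$ if and only if $(x,y)$ is a mean Li–Yorke pair for $T^n$, for every $n\ge 1$. (A pair $(x,y)$ is a mean Li–Yorke pair for $S$ if $\liminf_{n\to\infty}\frac1n\sum_{i=0}^{n-1}\rho(S^ix,S^iy)=0$ and $\limsup_{n\to\infty}\frac1n\sum_{i=0}^{n-1}\rho(S^ix,S^iy)>0$.) -/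
open Filter Finset

/-- `(x, y)` is a mean Li–Yorke pair for the map `S`: the Birkhoff averages of the
distances `dist (S^i x) (S^i y)` have liminf `0` and limsup strictly positive. -/
def IsMeanLiYorkePair {X : Type*} [MetricSpace X] (S : X → X) (x y : X) : Prop :=
  Filter.liminf
      (fun n : ℕ => (1 / n : ℝ) * ∑ i ∈ Finset.range n, dist (S^[i] x) (S^[i] y))
      Filter.atTop = 0 ∧
  0 < Filter.limsup
      (fun n : ℕ => (1 / n : ℝ) * ∑ i ∈ Finset.range n, dist (S^[i] x) (S^[i] y))
      Filter.atTop

/-- Uniform equicontinuity of the first `n` iterates of a continuous self-map of a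
compact metric space. -/
lemma uc_iter {X : Type*} [MetricSpace X] [CompactSpace X] (T : X → X) (hT : Continuous T)
    (n : ℕ) {ε : ℝ} (hε : 0 < ε) :
    ∃ δ, 0 < δ ∧ δ ≤ ε ∧ ∀ u v : X, dist u v < δ → ∀ j ≤ n, dist (T^[j] u) (T^[j] v) < ε := by
  induction n with
  | zero => exact ⟨ε, hε, le_rfl, fun u v h j hj => by simpa [Nat.le_zero.mp hj] using h⟩
  | succ n ih =>
    obtain ⟨δ', hδ'0, hδ'ε, hδ'⟩ := ih
    have hTu : UniformContinuous T := CompactSpace.uniformContinuous_of_continuous hT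
    obtain ⟨δ, hδ0, hδ⟩ := Metric.uniformContinuous_iff.mp hTu δ' hδ'0
    refine ⟨min δ δ', lt_min hδ0 hδ'0, (min_le_right _ _).trans hδ'ε, ?_⟩
    intro u v h j hj
    rcases Nat.eq_zero_or_pos j with rfl | hj0
    · simpa using lt_of_lt_of_le (lt_of_lt_of_le h (min_le_right _ _)) hδ'ε
    · obtain ⟨j, rfl⟩ := Nat.exists_eq_succ_of_ne_zero hj0.ne'
      have h1 : dist (T u) (T v) < δ' := hδ (lt_of_lt_of_le h (min_le_left _ _))
      have h2 := hδ' (T u) (T v) h1 j (Nat.succ_le_succ_iff.mp hj)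
      simpa [Function.iterate_succ_apply] using h2

lemma sum_blocks (g : ℕ → ℝ) (n N : ℕ) :
    ∑ m ∈ range (n * N), g m = ∑ i ∈ range N, ∑ j ∈ range n, g (n * i + j) := by
  induction N with
  | zero => simp
  | succ N ih =>
    rw [Nat.mul_succ, Finset.sum_range_add, ih, Finset.sum_range_succ]

lemma avg_le (g : ℕ → ℝ) (E : ℝ) (hE : 0 ≤ E) (hgE : ∀ k, g k ≤ E) (N : ℕ) :
    (1/N : ℝ) * ∑ i ∈ range N, g i ≤ E := by
  rcases Nat.eq_zero_or_pos N with rfl | hN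
  · simpa using hE
  · have hs : ∑ i ∈ range N, g i ≤ N * E := by
      calc ∑ i ∈ range N, g i ≤ ∑ i ∈ range N, E := Finset.sum_le_sum fun i _ => hgE i
      _ = N * E := by simp [mul_comm]
    have hN' : (0:ℝ) < N := by exact_mod_cast hN
    rw [div_mul_eq_mul_div, one_mul, div_le_iff₀ hN']
    linarith

lemma limsup_iter (f : ℕ → ℝ) (E : ℝ) (hE : 0 < E) (hf0 : ∀ k, 0 ≤ f k) (hfE : ∀ k, f k ≤ E)
    (n : ℕ) (hn : 1 ≤ n)
    (key : ∀ ε > (0:ℝ), ∃ δ, 0 < δ ∧ δ ≤ ε ∧ ∀ m j, j ≤ n → f m < δ → f (m + j) < ε)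
    (hA : 0 < limsup (fun N : ℕ => (1/N : ℝ) * ∑ i ∈ range N, f i) atTop) :
    0 < limsup (fun N : ℕ => (1/N : ℝ) * ∑ i ∈ range N, f (n * i)) atTop := by
  set A : ℕ → ℝ := fun N => (1/N : ℝ) * ∑ i ∈ range N, f i with hAdef
  set B : ℕ → ℝ := fun N => (1/N : ℝ) * ∑ i ∈ range N, f (n * i) with hBdef
  have hB0 : ∀ N, 0 ≤ B N := by
    intro N
    apply mul_nonneg (by positivity)
    exact Finset.sum_nonneg fun i _ => hf0 _
  have hA0 : ∀ N, 0 ≤ A N := by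
    intro N
    apply mul_nonneg (by positivity)
    exact Finset.sum_nonneg fun i _ => hf0 _
  have hBbdd : IsBoundedUnder (· ≤ ·) atTop B :=
    isBoundedUnder_of ⟨E, fun N => avg_le (fun i => f (n * i)) E hE.le (fun k => hfE _) N⟩
  have hAbddge : IsBoundedUnder (· ≥ ·) atTop A :=
    isBoundedUnder_of ⟨0, fun N => hA0 N⟩
  set c := limsup A atTop with hc
  have hfreq : ∃ᶠ M in atTop, c/2 < A M :=
    frequently_lt_of_lt_limsup (hAbddge.isCoboundedUnder_le) (by linarith)
  set ε := c/4 with hε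
  have hε0 : 0 < ε := by positivity
  obtain ⟨δ, hδ0, hδε, hδ⟩ := key ε hε0
  have hpt : ∀ m, f m ≤ ε + (E/δ) * f (n * (m / n)) := by
    intro m
    by_cases h : f (n * (m / n)) < δ
    · have hmod : m % n ≤ n := (Nat.mod_lt _ hn).le
      have := hδ (n * (m/n)) (m % n) hmod h
      rw [Nat.div_add_mod] at this
      have : f m < ε := this
      nlinarith [hf0 (n * (m/n)), div_nonneg hE.le hδ0.le]
    · push_neg at h
      have h1 : E ≤ (E/δ) * f (n * (m/n)) := by
        rw [div_mul_eq_mul_div, le_div_iff₀ hδ0]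
        nlinarith
      nlinarith [hfE m]
  have hsum : ∀ M : ℕ, ∑ m ∈ range M, f m ≤
      M * ε + (E/δ) * (n * ∑ i ∈ range (M/n + 1), f (n * i)) := by
    intro M
    have h1 : ∑ m ∈ range M, f m ≤ M * ε + (E/δ) * ∑ m ∈ range M, f (n * (m / n)) := by
      calc ∑ m ∈ range M, f m ≤ ∑ m ∈ range M, (ε + (E/δ) * f (n * (m / n))) :=
            Finset.sum_le_sum fun m _ => hpt m
        _ = M * ε + (E/δ) * ∑ m ∈ range M, f (n * (m / n)) := by
            rw [Finset.sum_add_distrib, Finset.mul_sum]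
            simp [mul_comm]
    have h2 : ∑ m ∈ range M, f (n * (m/n)) ≤
        ∑ m ∈ range (n * (M/n + 1)), f (n * (m/n)) := by
      apply Finset.sum_le_sum_of_subset_of_nonneg
      · apply Finset.range_subset_range.mpr
        have h1 := Nat.div_add_mod M n
        have h2 := Nat.mod_lt M hn
        have h3 : n * (M/n + 1) = n * (M/n) + n := by ring
        omega
      · intro i _ _; exact hf0 _
    have h3 : ∑ m ∈ range (n * (M/n + 1)), f (n * (m/n)) =
        n * ∑ i ∈ range (M/n + 1), f (n * i) := by
      rw [sum_blocks]
      have : ∀ i ∈ range (M/n + 1), ∑ j ∈ range n, f (n * ((n * i + j) / n)) = n * f (n * i) := by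
        intro i _
        have : ∀ j ∈ range n, f (n * ((n * i + j)/n)) = f (n * i) := by
          intro j hj
          rw [Finset.mem_range] at hj
          congr 2
          rw [Nat.mul_add_div hn]
          simp [Nat.div_eq_of_lt hj]
        rw [Finset.sum_congr rfl this]
        simp [mul_comm]
      rw [Finset.sum_congr rfl this, ← Finset.mul_sum]
    have hmono : (E/δ) * ∑ m ∈ range M, f (n * (m/n)) ≤
        (E/δ) * (n * ∑ i ∈ range (M/n + 1), f (n * i)) := by
      apply mul_le_mul_of_nonneg_left _ (div_nonneg hE.le hδ0.le)
      rw [← h3]; exact h2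
    linarith
  set c' := δ * ε / (2 * E) with hc'
  have hc'0 : 0 < c' := by positivity
  have hfreqB : ∃ᶠ N in atTop, c' ≤ B N := by
    rw [frequently_atTop] at hfreq ⊢
    intro k
    obtain ⟨M, hMk, hMA⟩ := hfreq (max (n * k) n)
    refine ⟨M / n + 1, ?_, ?_⟩
    · have h1 : n * k ≤ M := le_trans (le_max_left _ _) hMk
      have := Nat.div_le_div_right (c := n) h1
      rw [Nat.mul_div_cancel_left _ hn] at this
      omega
    · have hMn : n ≤ M := le_trans (le_max_right _ _) hMk
      have hM1 : 1 ≤ M := le_trans hn hMn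
      have hMpos : (0:ℝ) < M := by exact_mod_cast hM1
      set N := M / n + 1 with hN
      have hNpos : (0:ℝ) < N := by positivity
      have hnN : (n : ℝ) * N ≤ 2 * M := by
        have h1 : n * N ≤ M + n := by
          have := Nat.div_add_mod M n
          have := Nat.mod_lt M hn
          simp only [hN, Nat.mul_add, Nat.mul_one]
          omega
        have h2 : (n * N : ℕ) ≤ (2 * M : ℕ) := by omega
        exact_mod_cast h2
      have hS := hsum M
      have hAM : c/2 < (1/M : ℝ) * ∑ i ∈ range M, f i := hMA
      have hSM : 2 * ε * M < ∑ m ∈ range M, f m := by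
        rw [div_mul_eq_mul_div, one_mul, lt_div_iff₀ hMpos] at hAM
        have : c / 2 = 2 * ε := by rw [hε]; ring
        linarith [this ▸ hAM]
      set Sn := ∑ i ∈ range N, f (n * i) with hSn
      have hSn0 : 0 ≤ Sn := Finset.sum_nonneg fun i _ => hf0 _
      have hkey : ε * M < (E/δ) * (n * Sn) := by linarith
      show c' ≤ (1/N : ℝ) * Sn
      rw [hc', div_mul_eq_mul_div, one_mul, div_le_div_iff₀ (by positivity) hNpos]
      have hnpos : (0:ℝ) < n := by exact_mod_cast hn
      have hkey' : δ * ε * M < E * (n * Sn) := by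
        calc δ * ε * M = δ * (ε * M) := by ring
        _ < δ * (E/δ * (n*Sn)) := mul_lt_mul_of_pos_left hkey hδ0
        _ = E * (n*Sn) := by field_simp
      have h4 : (n:ℝ) * (δ * ε * N) ≤ (n:ℝ) * (Sn * (2*E)) := by
        nlinarith [hkey', mul_le_mul_of_nonneg_left hnN (mul_nonneg hδ0.le hε0.le)]
      exact le_of_mul_le_mul_left h4 hnpos
  calc (0:ℝ) < c' := hc'0
    _ ≤ limsup B atTop := le_limsup_of_frequently_le hfreqB hBbdd

lemma liminf_iter (f : ℕ → ℝ) (E : ℝ) (hE : 0 < E) (hf0 : ∀ k, 0 ≤ f k) (hfE : ∀ k, f k ≤ E)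
    (n : ℕ) (hn : 1 ≤ n)
    (key : ∀ ε > (0:ℝ), ∃ δ, 0 < δ ∧ δ ≤ ε ∧ ∀ m j, j ≤ n → f m < δ → f (m + j) < ε)
    (hA : liminf (fun N : ℕ => (1/N : ℝ) * ∑ i ∈ range N, f i) atTop = 0) :
    liminf (fun N : ℕ => (1/N : ℝ) * ∑ i ∈ range N, f (n * i)) atTop = 0 := by
  set A : ℕ → ℝ := fun N => (1/N : ℝ) * ∑ i ∈ range N, f i with hAdef
  set B : ℕ → ℝ := fun N => (1/N : ℝ) * ∑ i ∈ range N, f (n * i) with hBdef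
  have hB0 : ∀ N : ℕ, 0 ≤ B N := fun N =>
    mul_nonneg (by positivity) (Finset.sum_nonneg fun i _ => hf0 _)
  have hBbdd : IsBoundedUnder (· ≤ ·) atTop B :=
    isBoundedUnder_of ⟨E, fun N => avg_le (fun i => f (n * i)) E hE.le (fun k => hfE _) N⟩
  have hBbddge : IsBoundedUnder (· ≥ ·) atTop B := isBoundedUnder_of ⟨0, hB0⟩
  have hAbdd : IsBoundedUnder (· ≤ ·) atTop A :=
    isBoundedUnder_of ⟨E, fun N => avg_le f E hE.le hfE N⟩
  refine le_antisymm ?_ (le_liminf_of_le hBbdd.isCoboundedUnder_ge (Eventually.of_forall hB0))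
  have hupper : ∀ c > (0:ℝ), liminf B atTop ≤ c := by
    intro c hc
    obtain ⟨δ, hδ0, hδε', hδ⟩ := key (c/4) (by positivity)
    have hblk : ∀ i : ℕ, (n:ℝ) * f (n * (i+1)) ≤
        n * (c/4) + (E/δ) * ∑ j ∈ range n, f (n*i + j) := by
      intro i
      have hpt : ∀ j ∈ range n, f (n * (i+1)) ≤ c/4 + (E/δ) * f (n*i + j) := by
        intro j hj
        rw [Finset.mem_range] at hj
        by_cases h : f (n*i + j) < δ
        · have h2 := hδ (n*i + j) (n - j) (Nat.sub_le n j) h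
          have h3 : n*i + j + (n - j) = n * (i+1) := by
            have h4 : n * (i+1) = n*i + n := by ring
            omega
          rw [h3] at h2
          nlinarith [hf0 (n*i + j), div_nonneg hE.le hδ0.le]
        · push_neg at h
          have h1 : E ≤ (E/δ) * f (n*i + j) := by
            rw [div_mul_eq_mul_div, le_div_iff₀ hδ0]; nlinarith
          nlinarith [hfE (n * (i+1))]
      calc (n:ℝ) * f (n*(i+1)) = ∑ _j ∈ range n, f (n*(i+1)) := by simp [mul_comm]
        _ ≤ ∑ j ∈ range n, (c/4 + (E/δ) * f (n*i + j)) := Finset.sum_le_sum hpt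
        _ = n * (c/4) + (E/δ) * ∑ j ∈ range n, f (n*i + j) := by
            rw [Finset.sum_add_distrib, Finset.mul_sum]
            simp [mul_comm]
    have hsum : ∀ N' : ℕ, (n:ℝ) * ∑ i ∈ range N', f (n * (i+1)) ≤
        n * N' * (c/4) + (E/δ) * ∑ m ∈ range (n * N'), f m := by
      intro N'
      rw [Finset.mul_sum]
      calc ∑ i ∈ range N', (n:ℝ) * f (n*(i+1))
          ≤ ∑ i ∈ range N', ((n:ℝ) * (c/4) + (E/δ) * ∑ j ∈ range n, f (n*i + j)) :=
            Finset.sum_le_sum fun i _ => hblk i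
        _ = n * N' * (c/4) + (E/δ) * ∑ m ∈ range (n * N'), f m := by
            rw [Finset.sum_add_distrib, sum_blocks f n N', Finset.sum_const,
              Finset.card_range, nsmul_eq_mul, ← Finset.mul_sum]
            ring
    obtain ⟨k1, hk1⟩ := exists_nat_ge (2 * (E + E^2/δ) / c)
    have hfreqA : ∃ᶠ M in atTop, A M < δ * c / (4*E) := by
      apply frequently_lt_of_liminf_lt hAbdd.isCoboundedUnder_ge
      rw [hA]; positivity
    rw [frequently_atTop] at hfreqA
    have hfreqB : ∃ᶠ K in atTop, B K ≤ c := by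
      rw [frequently_atTop]
      intro k
      obtain ⟨M, hMk, hMA⟩ := hfreqA (n * (max k k1) + n)
      set N' := M / n + 1 with hN'def
      have hdivk : max k k1 ≤ M / n := by
        have h1 : (max k k1) * n ≤ M := by rw [Nat.mul_comm]; omega
        exact (Nat.le_div_iff_mul_le hn).mpr h1
      refine ⟨N' + 1, ?_, ?_⟩
      · omega
      · have hM1 : 1 ≤ M := le_trans hn (by omega)
        have hMpos : (0:ℝ) < M := by exact_mod_cast hM1
        set K := N' + 1 with hKdef
        have hKpos : (0:ℝ) < K := by positivity
        have hnpos : (0:ℝ) < n := by exact_mod_cast hn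
        have hdm := Nat.div_add_mod M n
        have hml := Nat.mod_lt M hn
        have hmul : n * N' = n * (M/n) + n := by rw [hN'def]; ring
        have hnat1 : n * N' ≤ M + n := by omega
        have hnat2 : M ≤ n * N' := by omega
        have hS1 : ∑ m ∈ range (n*N'), f m ≤ ∑ m ∈ range (M+n), f m :=
          Finset.sum_le_sum_of_subset_of_nonneg
            (Finset.range_subset_range.mpr hnat1) (fun i _ _ => hf0 _)
        have hS2 : ∑ m ∈ range (M+n), f m
            = ∑ m ∈ range M, f m + ∑ j ∈ range n, f (M+j) := Finset.sum_range_add f M n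
        have hS3 : ∑ j ∈ range n, f (M+j) ≤ n * E := by
          calc ∑ j ∈ range n, f (M+j) ≤ ∑ j ∈ range n, E :=
              Finset.sum_le_sum fun j _ => hfE _
          _ = n * E := by simp [mul_comm]
        have hSM : ∑ m ∈ range M, f m < M * (δ * c / (4*E)) := by
          have : A M < δ * c / (4*E) := hMA
          rw [hAdef] at this
          simp only at this
          rw [div_mul_eq_mul_div, one_mul, div_lt_iff₀ hMpos] at this
          linarith
        have hchain : (E/δ) * (∑ m ∈ range (n*N'), f m) ≤ M*(c/4) + n*(E^2/δ) := by
          have h6 : (E/δ) * (M*(δ*c/(4*E)) + n*E) = M*(c/4) + n*(E^2/δ) := by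
            field_simp
          calc (E/δ) * (∑ m ∈ range (n*N'), f m)
              ≤ (E/δ) * (M*(δ*c/(4*E)) + n*E) := by
                apply mul_le_mul_of_nonneg_left _ (by positivity)
                linarith
          _ = M*(c/4) + n*(E^2/δ) := h6
        have h0 : ∑ i ∈ range K, f (n*i) = (∑ i ∈ range N', f (n*(i+1))) + f 0 := by
          rw [hKdef, Finset.sum_range_succ']
          norm_num
        have hSnK : (n:ℝ) * ∑ i ∈ range K, f (n*i) ≤
            n*E + n*N'*(c/4) + (M*(c/4) + n*(E^2/δ)) := by
          rw [h0, mul_add]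
          have h7 := hsum N'
          have h8 : (n:ℝ) * f 0 ≤ n * E :=
            mul_le_mul_of_nonneg_left (hfE 0) hnpos.le
          linarith
        show B K ≤ c
        rw [hBdef]
        simp only
        rw [div_mul_eq_mul_div, one_mul, div_le_iff₀ hKpos]
        have hN'leK : (N':ℝ) ≤ K := by exact_mod_cast Nat.le_succ N'
        have hMleNK : (M:ℝ) ≤ (n:ℝ) * K := by
          have : (M:ℝ) ≤ (n:ℝ) * N' := by exact_mod_cast hnat2
          nlinarith
        have hKk1 : (k1:ℝ) ≤ K := by
          have : k1 ≤ K := by omega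
          exact_mod_cast this
        have hq : 2 * (E + E^2/δ) ≤ c * K := by
          have h9 : 2 * (E + E^2/δ) / c ≤ K := le_trans hk1 hKk1
          rw [div_le_iff₀ hc] at h9
          linarith
        have e1 : (n:ℝ)*N'*(c/4) ≤ (n:ℝ)*K*(c/4) := by
          apply mul_le_mul_of_nonneg_right _ (by positivity)
          exact mul_le_mul_of_nonneg_left hN'leK hnpos.le
        have e2 : (M:ℝ)*(c/4) ≤ (n:ℝ)*K*(c/4) :=
          mul_le_mul_of_nonneg_right hMleNK (by positivity)
        have e3 : (n:ℝ)*(E + E^2/δ) ≤ (n:ℝ)*(c*K/2) := by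
          apply mul_le_mul_of_nonneg_left _ hnpos.le
          linarith
        have hfin2 : (n:ℝ) * (∑ i ∈ range K, f (n*i)) ≤ (n:ℝ) * (c * K) := by
          calc (n:ℝ) * (∑ i ∈ range K, f (n*i))
              ≤ n*E + n*N'*(c/4) + (M*(c/4) + n*(E^2/δ)) := hSnK
          _ ≤ n*E + n*K*(c/4) + (n*K*(c/4) + n*(E^2/δ)) := by linarith
          _ = n*(E + E^2/δ) + n*K*(c/2) := by ring
          _ ≤ n*(c*K/2) + n*K*(c/2) := by linarith
          _ = n * (c*K) := by ring
        have := le_of_mul_le_mul_left hfin2 hnpos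
        linarith
    exact liminf_le_of_frequently_le hfreqB hBbddge
  have h := le_of_forall_pos_le_add (a := liminf B atTop) (b := 0)
    (fun ε hε => by simpa using hupper ε hε)
  exact h

/-- In a topological dynamical system `(X, T)` (compact metric space, `T` a continuous
surjection), `(x, y)` is a mean Li–Yorke pair for `T` iff it is a mean Li–Yorke pair
for `T^n` for every `n ≥ 1`. -/
theorem meanLiYorke_iff_forall_iterate {X : Type*} [MetricSpace X] [CompactSpace X]
    (T : X → X) (hT : Continuous T) (hTsurj : Function.Surjective T) (x y : X) :
    IsMeanLiYorkePair T x y ↔ ∀ n : ℕ, 1 ≤ n → IsMeanLiYorkePair (T^[n]) x y := by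
  constructor
  · rintro ⟨h1, h2⟩ n hn
    have hE : (0:ℝ) < Metric.diam (Set.univ : Set X) + 1 := by
      have := Metric.diam_nonneg (s := (Set.univ : Set X))
      linarith
    have hf0 : ∀ k : ℕ, 0 ≤ dist (T^[k] x) (T^[k] y) := fun k => dist_nonneg
    have hfE : ∀ k : ℕ, dist (T^[k] x) (T^[k] y) ≤ Metric.diam (Set.univ : Set X) + 1 := by
      intro k
      have := Metric.dist_le_diam_of_mem isCompact_univ.isBounded
        (Set.mem_univ (T^[k] x)) (Set.mem_univ (T^[k] y))
      linarith
    have key : ∀ ε > (0:ℝ), ∃ δ, 0 < δ ∧ δ ≤ ε ∧ ∀ m j, j ≤ n →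
        dist (T^[m] x) (T^[m] y) < δ → dist (T^[m+j] x) (T^[m+j] y) < ε := by
      intro ε hε
      obtain ⟨δ, hδ0, hδε, hδ⟩ := uc_iter T hT n hε
      refine ⟨δ, hδ0, hδε, fun m j hj hm => ?_⟩
      have := hδ _ _ hm j hj
      rw [← Function.iterate_add_apply, ← Function.iterate_add_apply, Nat.add_comm j m] at this
      exact this
    have hseq : (fun N : ℕ => (1/N : ℝ) * ∑ i ∈ range N, dist ((T^[n])^[i] x) ((T^[n])^[i] y))
        = fun N : ℕ => (1/N : ℝ) * ∑ i ∈ range N, dist (T^[n*i] x) (T^[n*i] y) := by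
      funext N
      congr 1
      apply Finset.sum_congr rfl
      intro i _
      rw [← Function.iterate_mul]
    constructor
    · show Filter.liminf (fun N : ℕ => (1/N : ℝ) *
        ∑ i ∈ range N, dist ((T^[n])^[i] x) ((T^[n])^[i] y)) atTop = 0
      rw [hseq]
      exact liminf_iter (fun k => dist (T^[k] x) (T^[k] y)) _ hE hf0 hfE n hn key h1
    · show 0 < Filter.limsup (fun N : ℕ => (1/N : ℝ) *
        ∑ i ∈ range N, dist ((T^[n])^[i] x) ((T^[n])^[i] y)) atTop
      rw [hseq]
      exact limsup_iter (fun k => dist (T^[k] x) (T^[k] y)) _ hE hf0 hfE n hn key h2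
  · intro h
    have := h 1 le_rfl
    rwa [Function.iterate_one] at this
end

section
/- Distribution principle for packing entropy on shift spaces: Let $Z\subset\Sigma$ and $s\ge 0$. Suppose there exist a probability measure $\mu$ on $Z$, a constant $C>0$ and a sequence $n_1<n_2<\cdots\to\infty$ such that for every $x\in Z$ and every $i$, $\mu([x|_{[0,n_i)}]\cap Z)\le C e^{-s n_i}$. Then the packing entropy satisfies $h^P(Z)\ge s$. -/
open scoped ENNReal

/-- The cylinder set of a finite word `w` in the full shift `A^ℕ`. -/
def cylW {A : Type*} (w : Σ n : ℕ, Fin n → A) : Set (ℕ → A) :=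
  {x | ∀ i : Fin w.1, x (i : ℕ) = w.2 i}

/-- `𝓟ˢ_N(Z)`: supremum of `∑ e^{-s|W|}` over families of pairwise disjoint cylinders
of length `≥ N`, each meeting `Z`. -/
noncomputable def PsN {A : Type*} (s : ℝ) (N : ℕ) (Z : Set (ℕ → A)) : ℝ≥0∞ :=
  ⨆ (𝒲 : Set (Σ n : ℕ, Fin n → A))
    (_ : (∀ w ∈ 𝒲, N ≤ w.1 ∧ (cylW w ∩ Z).Nonempty) ∧
      𝒲.Pairwise fun u v => Disjoint (cylW u) (cylW v)),
    ∑' w : 𝒲, ENNReal.ofReal (Real.exp (-s * (w : Σ n : ℕ, Fin n → A).1))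

/-- `𝓟ˢ_*(Z) = lim_{N→∞} 𝓟ˢ_N(Z)` (the quantities are nonincreasing in `N`). -/
noncomputable def PsStar {A : Type*} (s : ℝ) (Z : Set (ℕ → A)) : ℝ≥0∞ :=
  ⨅ N : ℕ, PsN s N Z

/-- `𝓟ˢ(Z)`: infimum of `∑ᵢ 𝓟ˢ_*(Zᵢ)` over countable covers `Z ⊆ ⋃ᵢ Zᵢ`. -/
noncomputable def Ps {A : Type*} (s : ℝ) (Z : Set (ℕ → A)) : ℝ≥0∞ :=
  ⨅ (Zs : ℕ → Set (ℕ → A)) (_ : Z ⊆ ⋃ i : ℕ, Zs i), ∑' i : ℕ, PsStar s (Zs i)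

/-- Packing entropy of `Z ⊆ A^ℕ`. -/
noncomputable def packingEntropy {A : Type*} (Z : Set (ℕ → A)) : ℝ :=
  sInf {s : ℝ | 0 ≤ s ∧ Ps s Z = 0}

/-!
If `Z ⊆ ⋃ᵢ Zᵢ`, then `1 = μ Z ≤ ∑ᵢ μ (Zᵢ ∩ Z)`. For each `i` and `N`, the prefixes of length
`nₖ ≥ N` of the points of `Zᵢ ∩ Z` form a packing of `Zᵢ` by disjoint cylinders whose traces on `Z`
cover `Zᵢ ∩ Z`, so `μ (Zᵢ ∩ Z) ≤ C ∑ e^{-s nₖ} ≤ C 𝓟ˢ_N(Zᵢ)`. Hence `𝓟ᵗ(Z) ≥ 1/C > 0` for every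
`t ≤ s`. Since the set of `t` with `𝓟ᵗ(Z) = 0` is nonempty (every `t > 2 log |A|` is in it), its
infimum is then at least `s`; nonemptiness matters because `sInf ∅ = 0` in `ℝ`.
-/

open MeasureTheory

section Cylinders

variable {A : Type*}

def prefixWord (n : ℕ) (x : ℕ → A) : Σ n : ℕ, Fin n → A :=
  ⟨n, fun j => x j⟩

theorem mem_cylW_prefixWord (n : ℕ) (x : ℕ → A) : x ∈ cylW (prefixWord n x) :=
  fun _ => rfl

theorem disjoint_cylW_of_ne {n : ℕ} {u v : Fin n → A} (h : u ≠ v) :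
    Disjoint (cylW ⟨n, u⟩) (cylW ⟨n, v⟩) :=
  Set.disjoint_left.mpr fun _ hu hv => h (funext fun i => (hu i).symm.trans (hv i))

theorem pairwise_disjoint_cylW_prefixWord (n : ℕ) (Z : Set (ℕ → A)) :
    (prefixWord n '' Z).Pairwise fun u v => Disjoint (cylW u) (cylW v) := by
  rintro _ ⟨x, -, rfl⟩ _ ⟨y, -, rfl⟩ hne
  exact disjoint_cylW_of_ne fun h => hne (by rw [prefixWord, prefixWord, h])

theorem finite_image_prefixWord [Finite A] (n : ℕ) (Z : Set (ℕ → A)) :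
    (prefixWord n '' Z).Finite :=
  (Set.finite_range fun u : Fin n → A => (⟨n, u⟩ : Σ n : ℕ, Fin n → A)).subset <| by
    rintro _ ⟨x, -, rfl⟩
    exact ⟨_, rfl⟩

end Cylinders

section MassDistribution

variable {A : Type*} [Finite A] [MeasurableSpace (ℕ → A)] {μ : Measure (ℕ → A)}
  {Z : Set (ℕ → A)} {t : ℝ} {c : ℝ≥0∞}

theorem measure_inter_div_le_PsN (Y : Set (ℕ → A)) {n N : ℕ} (hN : N ≤ n)
    (h : ∀ x ∈ Z, μ (cylW (prefixWord n x) ∩ Z) ≤ c * ENNReal.ofReal (Real.exp (-t * n))) :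
    μ (Y ∩ Z) / c ≤ PsN t N Y := by
  set 𝒲 := prefixWord n '' (Y ∩ Z)
  have : Countable 𝒲 := (finite_image_prefixWord n (Y ∩ Z)).countable.to_subtype
  have h𝒲 : (∀ w ∈ 𝒲, N ≤ w.1 ∧ (cylW w ∩ Y).Nonempty) ∧
      𝒲.Pairwise fun u v => Disjoint (cylW u) (cylW v) := by
    refine ⟨?_, pairwise_disjoint_cylW_prefixWord n _⟩
    rintro _ ⟨x, hx, rfl⟩
    exact ⟨hN, x, mem_cylW_prefixWord n x, hx.1⟩
  have hcover : Y ∩ Z ⊆ ⋃ w : 𝒲, cylW (w : Σ n : ℕ, Fin n → A) ∩ Z := fun x hx =>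
    Set.mem_iUnion.mpr ⟨⟨prefixWord n x, x, hx, rfl⟩, mem_cylW_prefixWord n x, hx.2⟩
  have hterm : ∀ w : 𝒲, μ (cylW (w : Σ n : ℕ, Fin n → A) ∩ Z) ≤
      c * ENNReal.ofReal (Real.exp (-t * (w : Σ n : ℕ, Fin n → A).1)) := by
    rintro ⟨_, x, hx, rfl⟩
    exact h x hx.2
  refine ENNReal.div_le_of_le_mul' ((measure_mono hcover).trans ?_)
  calc μ (⋃ w : 𝒲, cylW (w : Σ n : ℕ, Fin n → A) ∩ Z)
      ≤ ∑' w : 𝒲, μ (cylW (w : Σ n : ℕ, Fin n → A) ∩ Z) := measure_iUnion_le _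
    _ ≤ ∑' w : 𝒲, c * ENNReal.ofReal (Real.exp (-t * (w : Σ n : ℕ, Fin n → A).1)) :=
        ENNReal.tsum_le_tsum hterm
    _ = c * ∑' w : 𝒲, ENNReal.ofReal (Real.exp (-t * (w : Σ n : ℕ, Fin n → A).1)) :=
        ENNReal.tsum_mul_left
    _ ≤ c * PsN t N Y := by gcongr; exact le_iSup₂_of_le 𝒲 h𝒲 le_rfl

theorem measure_div_le_Ps
    (h : ∀ N : ℕ, ∃ n ≥ N, ∀ x ∈ Z,
      μ (cylW (prefixWord n x) ∩ Z) ≤ c * ENNReal.ofReal (Real.exp (-t * n))) :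
    μ Z / c ≤ Ps t Z := by
  refine le_iInf₂ fun Zs hcover => ?_
  have hPsStar : ∀ i, μ (Zs i ∩ Z) / c ≤ PsStar t (Zs i) := fun i =>
    le_iInf fun N =>
      let ⟨_, hnN, hn⟩ := h N
      measure_inter_div_le_PsN (Zs i) hnN hn
  calc μ Z / c ≤ μ (⋃ i, Zs i ∩ Z) / c := by
        gcongr
        intro x hx
        obtain ⟨i, hi⟩ := Set.mem_iUnion.mp (hcover hx)
        exact Set.mem_iUnion.mpr ⟨i, hi, hx⟩
    _ ≤ (∑' i, μ (Zs i ∩ Z)) / c := by gcongr; exact measure_iUnion_le _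
    _ = ∑' i, μ (Zs i ∩ Z) / c := by simp only [div_eq_mul_inv, ENNReal.tsum_mul_right]
    _ ≤ ∑' i, PsStar t (Zs i) := ENNReal.tsum_le_tsum hPsStar

end MassDistribution

section FiniteEntropy

variable {A : Type*} [Fintype A]

/-- With `a = e^{-t/2}`, a word of length `m ≥ N` has weight `e^{-tm} = a^m a^m ≤ a^N a^m`, and
the words of length `n` contribute `(|A| a)^n` to `∑_w a^{|w|}`. -/
theorem PsN_le_geometric (Z : Set (ℕ → A)) {t : ℝ} (ht : 0 ≤ t) (N : ℕ) :
    PsN t N Z ≤ ENNReal.ofReal (Real.exp (-(t / 2))) ^ N *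
      ∑' n : ℕ, (Fintype.card A * ENNReal.ofReal (Real.exp (-(t / 2)))) ^ n := by
  set a := ENNReal.ofReal (Real.exp (-(t / 2)))
  have ha : a ≤ 1 := ENNReal.ofReal_le_one.mpr (Real.exp_le_one_iff.mpr (by linarith))
  have hweight (m : ℕ) (hm : N ≤ m) : ENNReal.ofReal (Real.exp (-t * m)) ≤ a ^ N * a ^ m := by
    have hsplit : Real.exp (-t * m) = Real.exp (-(t / 2)) ^ m * Real.exp (-(t / 2)) ^ m := by
      rw [← Real.exp_nat_mul, ← Real.exp_add]
      ring_nf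
    rw [hsplit, ENNReal.ofReal_mul (by positivity), ENNReal.ofReal_pow (Real.exp_nonneg _)]
    exact mul_le_mul_left (pow_le_pow_right_of_le_one' ha hm) _
  refine iSup₂_le fun 𝒲 h𝒲 => ?_
  calc ∑' w : 𝒲, ENNReal.ofReal (Real.exp (-t * (w : Σ n : ℕ, Fin n → A).1))
      ≤ ∑' w : 𝒲, a ^ N * a ^ (w : Σ n : ℕ, Fin n → A).1 :=
        ENNReal.tsum_le_tsum fun w => hweight _ (h𝒲.1 _ w.2).1
    _ = a ^ N * ∑' w : 𝒲, a ^ (w : Σ n : ℕ, Fin n → A).1 := ENNReal.tsum_mul_left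
    _ ≤ a ^ N * ∑' w : Σ n : ℕ, Fin n → A, a ^ w.1 := by
        gcongr
        exact ENNReal.tsum_comp_le_tsum_of_injective Subtype.val_injective
          fun w : Σ n : ℕ, Fin n → A => a ^ w.1
    _ = a ^ N * ∑' n : ℕ, (Fintype.card A * a) ^ n := by
        rw [ENNReal.tsum_sigma (fun n (_ : Fin n → A) => a ^ n)]
        simp [mul_pow]

theorem PsStar_eq_zero_of_card_mul_lt_one (Z : Set (ℕ → A)) {t : ℝ} (ht : 0 < t)
    (h : Fintype.card A * ENNReal.ofReal (Real.exp (-(t / 2))) < 1) : PsStar t Z = 0 := by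
  set a := ENNReal.ofReal (Real.exp (-(t / 2)))
  have ha : a < 1 := ENNReal.ofReal_lt_one.mpr (Real.exp_lt_one_iff.mpr (by linarith))
  have hsum : ∑' n : ℕ, (Fintype.card A * a) ^ n ≠ ⊤ := by
    rw [ENNReal.tsum_geometric]
    exact ENNReal.inv_ne_top.mpr (tsub_pos_of_lt h).ne'
  have hlim : Filter.Tendsto (fun N : ℕ => a ^ N * ∑' n : ℕ, (Fintype.card A * a) ^ n)
      Filter.atTop (nhds 0) := by
    simpa using ENNReal.Tendsto.mul_const (ENNReal.tendsto_pow_atTop_nhds_zero_of_lt_one ha)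
      (Or.inr hsum)
  exact le_antisymm
    (ge_of_tendsto' hlim fun N => (iInf_le _ N).trans (PsN_le_geometric Z ht.le N)) zero_le

theorem exists_Ps_eq_zero (Z : Set (ℕ → A)) : ∃ t : ℝ, 0 ≤ t ∧ Ps t Z = 0 := by
  set k : ℝ := (Fintype.card A : ℝ)
  refine ⟨2 * (k + 1), by positivity, le_antisymm ?_ zero_le⟩
  have hk : Fintype.card A * ENNReal.ofReal (Real.exp (-(2 * (k + 1) / 2))) < 1 := by
    have hlt : k * Real.exp (-(k + 1)) < 1 := by
      rw [Real.exp_neg, ← div_eq_mul_inv, div_lt_one (Real.exp_pos _)]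
      linarith [Real.add_one_le_exp k, Real.exp_lt_exp.mpr (lt_add_one k)]
    rw [show (Fintype.card A : ℝ≥0∞) = ENNReal.ofReal k by simp [k],
      ← ENNReal.ofReal_mul (by positivity), mul_div_cancel_left₀ _ two_ne_zero]
    exact ENNReal.ofReal_lt_one.mpr hlt
  calc Ps (2 * (k + 1)) Z ≤ ∑' _ : ℕ, PsStar (2 * (k + 1)) Z :=
        iInf₂_le (fun _ => Z) (Set.subset_iUnion (fun _ => Z) 0)
    _ = 0 := by simp [PsStar_eq_zero_of_card_mul_lt_one Z (by positivity) hk]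

end FiniteEntropy

theorem packingEntropy_ge_of_distribution_general {A : Type*} [Fintype A]
    [MeasurableSpace (ℕ → A)] (Z : Set (ℕ → A)) (s : ℝ)
    (μ : MeasureTheory.Measure (ℕ → A))
    (hZ : μ Z = 1) (C : ℝ) (nseq : ℕ → ℕ) (hmono : StrictMono nseq)
    (hμ : ∀ x ∈ Z, ∀ i : ℕ,
      μ (cylW ⟨nseq i, fun j => x (j : ℕ)⟩ ∩ Z)
        ≤ ENNReal.ofReal (C * Real.exp (-s * nseq i))) :
    s ≤ packingEntropy Z := by
  refine le_csInf (exists_Ps_eq_zero Z) ?_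
  rintro t ⟨-, hPs⟩
  by_contra! hts
  have hbound : μ Z / ENNReal.ofReal C ≤ Ps t Z := by
    refine measure_div_le_Ps fun N => ⟨nseq N, hmono.le_apply, fun x hx => ?_⟩
    calc μ (cylW (prefixWord (nseq N) x) ∩ Z) ≤ ENNReal.ofReal (C * Real.exp (-s * nseq N)) :=
          hμ x hx N
      _ = ENNReal.ofReal C * ENNReal.ofReal (Real.exp (-s * nseq N)) :=
          ENNReal.ofReal_mul' (Real.exp_nonneg _)
      _ ≤ _ := by gcongr
  rw [hZ, hPs] at hbound
  simp at hbound

/-- Distribution principle for packing entropy: if a probability measure `μ` on `Z`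
satisfies `μ([x|_{[0,nᵢ)}] ∩ Z) ≤ C e^{-s nᵢ}` for all `x ∈ Z` along a strictly
increasing sequence `nᵢ → ∞`, then `h^P(Z) ≥ s`. -/
theorem packingEntropy_ge_of_distribution {A : Type*} [Fintype A]
    [MeasurableSpace (ℕ → A)] (Z : Set (ℕ → A)) (s : ℝ) (hs : 0 ≤ s)
    (μ : MeasureTheory.Measure (ℕ → A)) [MeasureTheory.IsProbabilityMeasure μ]
    (hZ : μ Z = 1) (C : ℝ) (hC : 0 < C) (nseq : ℕ → ℕ) (hmono : StrictMono nseq)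
    (hμ : ∀ x ∈ Z, ∀ i : ℕ,
      μ (cylW ⟨nseq i, fun j => x (j : ℕ)⟩ ∩ Z)
        ≤ ENNReal.ofReal (C * Real.exp (-s * nseq i))) :
    s ≤ packingEntropy Z :=
  packingEntropy_ge_of_distribution_general Z s μ hZ C nseq hmono hμ
end
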